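/- arXiv:1909.10942 — 3 statements merged into one kernel-verified Lean document; each statement's English description precedes it below -/
import Mathlib

section
/- Let A = (a_{i₁…i_{k+p}}) ∈ ℝ^{n₁×⋯×n_{k+p}} and B = (b_{i_{k+1}…i_{k+p+q}}) ∈ ℝ^{n_{k+1}×⋯×n_{k+p+q}}, and define their contraction product C ∈ ℝ^{n₁×⋯×n_k×n_{k+p+1}×⋯×n_{k+p+q}} by summing over the shared p indices: c_{i₁…i_k i_{k+p+1}…i_{k+p+q}} = Σ a_{i₁…i_{k+p}} b_{i_{k+1}…i_{k+p+q}}. Then ‖C‖_* ≤ ‖A‖_* · ‖B‖_*, where ‖·‖_* is the tensor nuclear norm. -/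
open Finset

/-- The nuclear norm of a real tensor `T` indexed by `∀ i : ι, Fin (n i)`:
the infimum of `∑ |λ_j|` over all decompositions of `T` into rank-one tensors
with unit-norm factors. -/
noncomputable def tensorNuclearNorm {ι : Type} [Fintype ι] [DecidableEq ι] {n : ι → ℕ}
    (T : (∀ i, Fin (n i)) → ℝ) : ℝ :=
  sInf { s | ∃ (r : ℕ) (lam : Fin r → ℝ)
      (u : Fin r → ∀ i : ι, EuclideanSpace ℝ (Fin (n i))),
      (∀ j i, ‖u j i‖ = 1) ∧
      (∀ x, T x = ∑ j, lam j * ∏ i, u j i (x i)) ∧ s = ∑ j, |lam j| }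

/-- The spectral norm of a real tensor: the supremum of the inner product of
`T` with rank-one tensors built from unit vectors. -/
noncomputable def tensorSpectralNorm {ι : Type} [Fintype ι] [DecidableEq ι] {n : ι → ℕ}
    (T : (∀ i, Fin (n i)) → ℝ) : ℝ :=
  sSup { s | ∃ u : ∀ i : ι, EuclideanSpace ℝ (Fin (n i)),
      (∀ i, ‖u i‖ = 1) ∧ s = ∑ x, T x * ∏ i, u i (x i) }

/-!
Expand nuclear decompositions `A = ∑ⱼ λⱼ uⱼ` and `B = ∑ₘ μₘ vₘ` and contract term by term.
The contraction of two rank-one tensors is again rank-one, scaled by the product over the shared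
modes of the inner products of the contracted factors, which has absolute value at most `1` by
Cauchy–Schwarz. This decomposes `C` at cost at most `(∑ⱼ |λⱼ|) (∑ₘ |μₘ|)`, and taking infima over
both decompositions gives `‖C‖_* ≤ ‖A‖_* ‖B‖_*`.
-/

open scoped InnerProductSpace

theorem le_mul_csInf {S : Set ℝ} (hS : S.Nonempty) {c x : ℝ} (hc : 0 ≤ c)
    (h : ∀ a ∈ S, x ≤ c * a) : x ≤ c * sInf S := by
  rw [← smul_eq_mul, ← Real.sInf_smul_of_nonneg hc]
  exact le_csInf hS.smul_set (by rintro _ ⟨a, ha, rfl⟩; exact h a ha)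

theorem le_csInf_mul_csInf {S T : Set ℝ} (hS : S.Nonempty) (hT : T.Nonempty)
    (hS₀ : ∀ a ∈ S, 0 ≤ a) (hT₀ : ∀ b ∈ T, 0 ≤ b) {x : ℝ}
    (h : ∀ a ∈ S, ∀ b ∈ T, x ≤ a * b) : x ≤ sInf S * sInf T := by
  refine le_mul_csInf hT (Real.sInf_nonneg hS₀) fun b hb => ?_
  rw [mul_comm]
  exact le_mul_csInf hS (hT₀ b hb) fun a ha => (h a ha b hb).trans_eq (mul_comm _ _)

section NuclearNorm

variable {ι : Type} [Fintype ι] {n : ι → ℕ}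

def nuclearDecompositionCosts (T : (∀ i, Fin (n i)) → ℝ) : Set ℝ :=
  { s | ∃ (r : ℕ) (lam : Fin r → ℝ)
      (u : Fin r → ∀ i : ι, EuclideanSpace ℝ (Fin (n i))),
      (∀ j i, ‖u j i‖ = 1) ∧
      (∀ x, T x = ∑ j, lam j * ∏ i, u j i (x i)) ∧ s = ∑ j, |lam j| }

theorem tensorNuclearNorm_eq_sInf [DecidableEq ι] (T : (∀ i, Fin (n i)) → ℝ) :
    tensorNuclearNorm T = sInf (nuclearDecompositionCosts T) := rfl

theorem nonneg_of_mem_nuclearDecompositionCosts {T : (∀ i, Fin (n i)) → ℝ} {s : ℝ}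
    (hs : s ∈ nuclearDecompositionCosts T) : 0 ≤ s := by
  obtain ⟨r, lam, u, -, -, rfl⟩ := hs
  positivity

theorem sum_abs_mem_nuclearDecompositionCosts {J : Type} [Fintype J]
    {T : (∀ i, Fin (n i)) → ℝ} (lam : J → ℝ) (u : J → ∀ i, EuclideanSpace ℝ (Fin (n i)))
    (hu : ∀ j i, ‖u j i‖ = 1) (hT : ∀ x, T x = ∑ j, lam j * ∏ i, u j i (x i)) :
    ∑ j, |lam j| ∈ nuclearDecompositionCosts T := by
  let e := (Fintype.equivFin J).symm
  refine ⟨_, lam ∘ e, u ∘ e, fun j => hu (e j), fun x => ?_, (e.sum_comp _).symm⟩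
  rw [hT x]
  exact (e.sum_comp (fun j => lam j * ∏ i, u j i (x i))).symm

theorem nuclearDecompositionCosts_nonempty [DecidableEq ι] (T : (∀ i, Fin (n i)) → ℝ) :
    (nuclearDecompositionCosts T).Nonempty := by
  -- the coordinate decomposition `T = ∑ y, T y • e_y`
  refine ⟨_, sum_abs_mem_nuclearDecompositionCosts T
    (fun y i => EuclideanSpace.single (y i) 1) (fun y i => by simp) fun x => ?_⟩
  simp [Fintype.prod_boole, ← funext_iff]

theorem tensorNuclearNorm_le_sum_abs [DecidableEq ι] {J : Type} [Fintype J]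
    {T : (∀ i, Fin (n i)) → ℝ} (lam : J → ℝ) (u : J → ∀ i, EuclideanSpace ℝ (Fin (n i)))
    (hu : ∀ j i, ‖u j i‖ = 1) (hT : ∀ x, T x = ∑ j, lam j * ∏ i, u j i (x i)) :
    tensorNuclearNorm T ≤ ∑ j, |lam j| :=
  csInf_le ⟨0, fun _ => nonneg_of_mem_nuclearDecompositionCosts⟩
    (sum_abs_mem_nuclearDecompositionCosts lam u hu hT)

end NuclearNorm

theorem sum_prod_mul_prod_eq_prod_inner {κ : Type} [Fintype κ] [DecidableEq κ] {n : κ → ℕ}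
    (u v : ∀ i, EuclideanSpace ℝ (Fin (n i))) :
    ∑ y : ∀ i, Fin (n i), (∏ i, u i (y i)) * ∏ i, v i (y i) = ∏ i, ⟪u i, v i⟫_ℝ := by
  simp only [← Finset.prod_mul_distrib, PiLp.inner_apply]
  simpa [mul_comm] using (Fintype.prod_sum fun i t => u i t * v i t).symm

theorem abs_prod_inner_le_one {κ : Type} [Fintype κ] {n : κ → ℕ}
    (u v : ∀ i, EuclideanSpace ℝ (Fin (n i))) (hu : ∀ i, ‖u i‖ = 1) (hv : ∀ i, ‖v i‖ = 1) :
    |∏ i, ⟪u i, v i⟫_ℝ| ≤ 1 := by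
  rw [Finset.abs_prod]
  refine Finset.prod_le_one (fun _ _ => abs_nonneg _) fun i _ => ?_
  simpa [hu i, hv i] using abs_real_inner_le_norm (u i) (v i)

section Contraction

variable {ι κ μ : Type} [Fintype ι] [Fintype κ] [Fintype μ] [DecidableEq κ]
  {n₁ : ι → ℕ} {n₂ : κ → ℕ} {n₃ : μ → ℕ}

theorem sum_rankOne_mul_rankOne_eq_prod_inner_mul
    (u : ∀ i : ι ⊕ κ, EuclideanSpace ℝ (Fin (Sum.elim n₁ n₂ i)))
    (v : ∀ i : κ ⊕ μ, EuclideanSpace ℝ (Fin (Sum.elim n₂ n₃ i)))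
    (x : ∀ i, Fin (n₁ i)) (z : ∀ i, Fin (n₃ i)) :
    ∑ y : ∀ i, Fin (n₂ i),
        (∏ i, u i (Sum.rec (motive := fun i => Fin (Sum.elim n₁ n₂ i)) x y i)) *
          ∏ i, v i (Sum.rec (motive := fun i => Fin (Sum.elim n₂ n₃ i)) y z i) =
      (∏ i, ⟪u (.inr i), v (.inl i)⟫_ℝ) *
        ((∏ a, u (.inl a) (x a)) * ∏ b, v (.inr b) (z b)) := by
  rw [← sum_prod_mul_prod_eq_prod_inner (fun i => u (.inr i)) (fun i => v (.inl i)),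
    Finset.sum_mul]
  refine Finset.sum_congr rfl fun y _ => ?_
  simp only [Fintype.prod_sum_type]
  ring

theorem contraction_eq_sum_rankOne {JA JB : Type} [Fintype JA] [Fintype JB]
    {A : (∀ i : ι ⊕ κ, Fin (Sum.elim n₁ n₂ i)) → ℝ}
    {B : (∀ i : κ ⊕ μ, Fin (Sum.elim n₂ n₃ i)) → ℝ}
    {C : (∀ i : ι ⊕ μ, Fin (Sum.elim n₁ n₃ i)) → ℝ}
    (hC : ∀ (x : ∀ i, Fin (n₁ i)) (z : ∀ i, Fin (n₃ i)),
      C (fun i => Sum.rec (motive := fun i => Fin (Sum.elim n₁ n₃ i)) x z i) =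
        ∑ y : ∀ i, Fin (n₂ i),
          A (fun i => Sum.rec (motive := fun i => Fin (Sum.elim n₁ n₂ i)) x y i) *
          B (fun i => Sum.rec (motive := fun i => Fin (Sum.elim n₂ n₃ i)) y z i))
    (lamA : JA → ℝ) (uA : JA → ∀ i : ι ⊕ κ, EuclideanSpace ℝ (Fin (Sum.elim n₁ n₂ i)))
    (hA : ∀ x, A x = ∑ j, lamA j * ∏ i, uA j i (x i))
    (lamB : JB → ℝ) (uB : JB → ∀ i : κ ⊕ μ, EuclideanSpace ℝ (Fin (Sum.elim n₂ n₃ i)))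
    (hB : ∀ x, B x = ∑ j, lamB j * ∏ i, uB j i (x i)) (xz : ∀ i, Fin (Sum.elim n₁ n₃ i)) :
    C xz = ∑ jm : JA × JB,
      (lamA jm.1 * lamB jm.2 * ∏ i, ⟪uA jm.1 (.inr i), uB jm.2 (.inl i)⟫_ℝ) *
        ∏ i, (Sum.rec (motive := fun i => EuclideanSpace ℝ (Fin (Sum.elim n₁ n₃ i)))
          (fun a => uA jm.1 (.inl a)) (fun b => uB jm.2 (.inr b)) i) (xz i) := by
  obtain ⟨x, z, rfl⟩ : ∃ (x : ∀ i, Fin (n₁ i)) (z : ∀ i, Fin (n₃ i)),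
      xz = fun i => Sum.rec (motive := fun i => Fin (Sum.elim n₁ n₃ i)) x z i :=
    ⟨_, _, funext (by rintro (a | b) <;> rfl)⟩
  simp only [hC, hA, hB, Finset.sum_mul_sum, Finset.sum_comm (γ := ∀ i, Fin (n₂ i)),
    Fintype.sum_prod_type]
  refine Finset.sum_congr rfl fun j _ => Finset.sum_congr rfl fun m _ => ?_
  rw [Fintype.prod_sum_type, mul_assoc, ← sum_rankOne_mul_rankOne_eq_prod_inner_mul,
    Finset.mul_sum]
  refine Finset.sum_congr rfl fun y _ => ?_
  ring

theorem tensorNuclearNorm_contraction_le_sum_abs_mul [DecidableEq ι] [DecidableEq μ]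
    {JA JB : Type} [Fintype JA] [Fintype JB]
    {A : (∀ i : ι ⊕ κ, Fin (Sum.elim n₁ n₂ i)) → ℝ}
    {B : (∀ i : κ ⊕ μ, Fin (Sum.elim n₂ n₃ i)) → ℝ}
    {C : (∀ i : ι ⊕ μ, Fin (Sum.elim n₁ n₃ i)) → ℝ}
    (hC : ∀ (x : ∀ i, Fin (n₁ i)) (z : ∀ i, Fin (n₃ i)),
      C (fun i => Sum.rec (motive := fun i => Fin (Sum.elim n₁ n₃ i)) x z i) =
        ∑ y : ∀ i, Fin (n₂ i),
          A (fun i => Sum.rec (motive := fun i => Fin (Sum.elim n₁ n₂ i)) x y i) *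
          B (fun i => Sum.rec (motive := fun i => Fin (Sum.elim n₂ n₃ i)) y z i))
    (lamA : JA → ℝ) (uA : JA → ∀ i : ι ⊕ κ, EuclideanSpace ℝ (Fin (Sum.elim n₁ n₂ i)))
    (huA : ∀ j i, ‖uA j i‖ = 1) (hA : ∀ x, A x = ∑ j, lamA j * ∏ i, uA j i (x i))
    (lamB : JB → ℝ) (uB : JB → ∀ i : κ ⊕ μ, EuclideanSpace ℝ (Fin (Sum.elim n₂ n₃ i)))
    (huB : ∀ j i, ‖uB j i‖ = 1) (hB : ∀ x, B x = ∑ j, lamB j * ∏ i, uB j i (x i)) :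
    tensorNuclearNorm C ≤ (∑ j, |lamA j|) * ∑ m, |lamB m| := by
  calc tensorNuclearNorm C
      ≤ ∑ jm : JA × JB,
          |lamA jm.1 * lamB jm.2 * ∏ i, ⟪uA jm.1 (.inr i), uB jm.2 (.inl i)⟫_ℝ| :=
        tensorNuclearNorm_le_sum_abs _ _
          (fun jm => by rintro (a | b); exacts [huA _ _, huB _ _])
          (contraction_eq_sum_rankOne hC lamA uA hA lamB uB hB)
    _ ≤ ∑ jm : JA × JB, |lamA jm.1| * |lamB jm.2| := by
        refine Finset.sum_le_sum fun jm _ => ?_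
        rw [abs_mul, abs_mul]
        exact mul_le_of_le_one_right (by positivity)
          (abs_prod_inner_le_one _ _ (fun i => huA _ _) fun i => huB _ _)
    _ = (∑ j, |lamA j|) * ∑ m, |lamB m| := by
        rw [Fintype.sum_prod_type, Finset.sum_mul_sum]

end Contraction

/-- The nuclear norm of the contraction product of two tensors over `p` shared
modes is at most the product of their nuclear norms. Tensor `A` has modes
`Fin k ⊕ Fin p`, tensor `B` has modes `Fin p ⊕ Fin q`, and their contraction
product `C` has modes `Fin k ⊕ Fin q`. -/
theorem tensorNuclearNorm_contraction_le {k p q : ℕ}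
    {n₁ : Fin k → ℕ} {n₂ : Fin p → ℕ} {n₃ : Fin q → ℕ}
    (A : (∀ i : Fin k ⊕ Fin p, Fin (Sum.elim n₁ n₂ i)) → ℝ)
    (B : (∀ i : Fin p ⊕ Fin q, Fin (Sum.elim n₂ n₃ i)) → ℝ)
    (C : (∀ i : Fin k ⊕ Fin q, Fin (Sum.elim n₁ n₃ i)) → ℝ)
    (hC : ∀ (x : ∀ i : Fin k, Fin (n₁ i)) (z : ∀ i : Fin q, Fin (n₃ i)),
      C (fun i => Sum.rec (motive := fun i => Fin (Sum.elim n₁ n₃ i)) x z i) =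
        ∑ y : ∀ i : Fin p, Fin (n₂ i),
          A (fun i => Sum.rec (motive := fun i => Fin (Sum.elim n₁ n₂ i)) x y i) *
          B (fun i => Sum.rec (motive := fun i => Fin (Sum.elim n₂ n₃ i)) y z i)) :
    tensorNuclearNorm C ≤ tensorNuclearNorm A * tensorNuclearNorm B := by
  rw [tensorNuclearNorm_eq_sInf A, tensorNuclearNorm_eq_sInf B]
  refine le_csInf_mul_csInf (nuclearDecompositionCosts_nonempty A)
    (nuclearDecompositionCosts_nonempty B) (fun _ => nonneg_of_mem_nuclearDecompositionCosts)
    (fun _ => nonneg_of_mem_nuclearDecompositionCosts) ?_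
  rintro _ ⟨rA, lamA, uA, huA, hA, rfl⟩ _ ⟨rB, lamB, uB, huB, hB, rfl⟩
  exact tensorNuclearNorm_contraction_le_sum_abs_mul hC lamA uA huA hA lamB uB huB hB
end

section
/- Let A = (a_{ijk}) ∈ ℝ^{d×d×d} be symmetric, i.e., a_{ijk} is invariant under all permutations of (i,j,k). Then its cubic power A³ (with entries t_{ijk} = Σ_{s,p,q} a_{ipq} a_{sjq} a_{spk}) is also symmetric. -/
open Finset

/-- The cubic power of a third order tensor:
`(A³)_{ijk} = ∑_{s,p,q} a_{ipq} a_{sjq} a_{spk}`. -/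
def cubicPow {d₁ d₂ d₃ : ℕ} (A : Fin d₁ → Fin d₂ → Fin d₃ → ℝ) :
    Fin d₁ → Fin d₂ → Fin d₃ → ℝ :=
  fun i j k => ∑ s, ∑ p, ∑ q, A i p q * A s j q * A s p k

/-! Since the adjacent transpositions generate `S₃`, it suffices to check that `A³` is invariant
under swapping its first two and its last two indices. Each of these swaps only needs the
corresponding symmetry of `A`, after exchanging the two summation indices `s, p`, resp. `p, q`. -/

open Equiv

theorem comp_perm_eq_of_comp_swap_castSucc_succ_eq {n : ℕ} {α β : Type*}
    (g : (Fin (n + 1) → α) → β)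
    (h : ∀ (i : Fin n) (v : Fin (n + 1) → α), g (v ∘ swap i.castSucc i.succ) = g v)
    (σ : Perm (Fin (n + 1))) (v : Fin (n + 1) → α) : g (v ∘ σ) = g v := by
  have hσ : σ ∈ Submonoid.closure (Set.range fun i : Fin n ↦ swap i.castSucc i.succ) := by
    rw [Perm.mclosure_swap_castSucc_succ]; trivial
  induction hσ using Submonoid.closure_induction generalizing v with
  | mem τ hτ =>
    obtain ⟨i, rfl⟩ := hτ
    exact h i v
  | one => rfl
  | mul τ ρ _ _ hτ hρ =>
    rw [Perm.coe_mul, ← Function.comp_assoc, hρ, hτ]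

theorem apply_comm_left_of_perm_invariant {α β : Type*} {f : α → α → α → β}
    (hf : ∀ (σ : Perm (Fin 3)) (v : Fin 3 → α),
      f (v (σ 0)) (v (σ 1)) (v (σ 2)) = f (v 0) (v 1) (v 2))
    (x y z : α) : f x y z = f y x z := by
  simpa [swap_apply_def] using hf (swap 0 1) ![y, x, z]

theorem apply_comm_right_of_perm_invariant {α β : Type*} {f : α → α → α → β}
    (hf : ∀ (σ : Perm (Fin 3)) (v : Fin 3 → α),
      f (v (σ 0)) (v (σ 1)) (v (σ 2)) = f (v 0) (v 1) (v 2))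
    (x y z : α) : f x y z = f x z y := by
  simpa [swap_apply_def] using hf (swap 1 2) ![x, z, y]

theorem perm_invariant_of_apply_comm {α β : Type*} {f : α → α → α → β}
    (hleft : ∀ x y z, f x y z = f y x z) (hright : ∀ x y z, f x y z = f x z y)
    (σ : Perm (Fin 3)) (v : Fin 3 → α) :
    f (v (σ 0)) (v (σ 1)) (v (σ 2)) = f (v 0) (v 1) (v 2) := by
  refine comp_perm_eq_of_comp_swap_castSucc_succ_eq (fun w ↦ f (w 0) (w 1) (w 2)) ?_ σ v
  intro i w
  fin_cases i
  · exact (hleft _ _ _).symm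
  · exact (hright _ _ _).symm

theorem cubicPow_comm_left {n m : ℕ} {A : Fin n → Fin n → Fin m → ℝ}
    (hA : ∀ x y z, A x y z = A y x z) (x y : Fin n) (z : Fin m) :
    cubicPow A x y z = cubicPow A y x z := by
  unfold cubicPow
  rw [Finset.sum_comm]
  refine sum_congr rfl fun s _ ↦ sum_congr rfl fun p _ ↦ sum_congr rfl fun q _ ↦ ?_
  rw [hA x s q, hA p y q, hA p s z]
  ring

theorem cubicPow_comm_right {n m : ℕ} {A : Fin n → Fin m → Fin m → ℝ}
    (hA : ∀ x y z, A x y z = A x z y) (x : Fin n) (y z : Fin m) :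
    cubicPow A x y z = cubicPow A x z y := by
  unfold cubicPow
  refine sum_congr rfl fun s _ ↦ ?_
  rw [Finset.sum_comm]
  refine sum_congr rfl fun p _ ↦ sum_congr rfl fun q _ ↦ ?_
  rw [hA x q p, hA s y p, hA s q z]
  ring

/-- The cubic power of a symmetric third order tensor is symmetric. -/
theorem cubicPow_symmetric {d : ℕ} (A : Fin d → Fin d → Fin d → ℝ)
    (hA : ∀ (σ : Equiv.Perm (Fin 3)) (v : Fin 3 → Fin d),
      A (v (σ 0)) (v (σ 1)) (v (σ 2)) = A (v 0) (v 1) (v 2)) :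
    ∀ (σ : Equiv.Perm (Fin 3)) (v : Fin 3 → Fin d),
      cubicPow A (v (σ 0)) (v (σ 1)) (v (σ 2)) = cubicPow A (v 0) (v 1) (v 2) :=
  perm_invariant_of_apply_comm
    (cubicPow_comm_left (apply_comm_left_of_perm_invariant hA))
    (cubicPow_comm_right (apply_comm_right_of_perm_invariant hA))
end

section
/- Let ‖·‖ be a norm on ℝ^{d₁×d₂×d₃} satisfying ‖A³‖ ≤ ‖A‖³ for the cubic power. Then for any A, the sequence m ↦ ‖A^{3^m}‖^{1/3^m} is non-increasing, and hence converges (to its infimum, the Gelfand limit ρ(A)). Moreover, for any other norm ‖·‖′ on ℝ^{d₁×d₂×d₃}, the sequence (‖A^{3^m}‖′)^{1/3^m} converges to the same limit ρ(A). -/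
/-!
With `a m = N (A^{3^m})`, the hypothesis `N (B³) ≤ (N B)³` gives `a (m + 1) ≤ (a m)³`, so
`(a m)^{1/3^m}` decreases and converges to its infimum. In finite dimension any two norms satisfy
`c N ≤ N' ≤ C N` with `c, C > 0` (the lower bound comes from the minimum of a norm on the compact
unit sphere), and since `c^{1/3^m}, C^{1/3^m} → 1` the sequence `N' (A^{3^m})^{1/3^m}` is squeezed
to the same limit.
-/

open Finset

open Filter Topology

namespace Seminorm

variable {E : Type*} [NormedAddCommGroup E] [NormedSpace ℝ E] [FiniteDimensional ℝ E]

theorem exists_le_mul_norm (p : Seminorm ℝ E) : ∃ C, ∀ x, p x ≤ C * ‖x‖ := by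
  let b := Module.finBasis ℝ E
  let coords : E →L[ℝ] (Fin (Module.finrank ℝ E) → ℝ) :=
    b.equivFun.toContinuousLinearEquiv.toContinuousLinearMap
  refine ⟨‖coords‖ * ∑ i, p (b i), fun x => ?_⟩
  have hcoord : ∀ i, |b.repr x i| ≤ ‖coords‖ * ‖x‖ := fun i =>
    (norm_le_pi_norm (coords x) i).trans (coords.le_opNorm x)
  calc p x = p (∑ i, b.repr x i • b i) := by rw [b.sum_repr]
    _ ≤ ∑ i, p (b.repr x i • b i) :=
        Finset.le_sum_of_subadditive p (map_zero p).le (map_add_le_add p) _ _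
    _ = ∑ i, |b.repr x i| * p (b i) := by simp only [map_smul_eq_mul, Real.norm_eq_abs]
    _ ≤ ∑ i, ‖coords‖ * ‖x‖ * p (b i) :=
        Finset.sum_le_sum fun i _ => mul_le_mul_of_nonneg_right (hcoord i) (apply_nonneg p _)
    _ = ‖coords‖ * (∑ i, p (b i)) * ‖x‖ := by rw [Finset.mul_sum, Finset.sum_mul]; ring_nf

theorem continuous_of_finiteDimensional (p : Seminorm ℝ E) : Continuous p := by
  obtain ⟨C, hC⟩ := p.exists_le_mul_norm
  refine (LipschitzWith.of_dist_le_mul (K := C.toNNReal) fun x y => ?_).continuous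
  rw [Real.dist_eq, dist_eq_norm]
  exact (abs_sub_map_le_sub p x y).trans ((hC _).trans (by gcongr; exact C.le_coe_toNNReal))

theorem exists_pos_mul_norm_le (p : Seminorm ℝ E) (hp : ∀ x, p x = 0 → x = 0) :
    ∃ c > 0, ∀ x, c * ‖x‖ ≤ p x := by
  rcases subsingleton_or_nontrivial E with hE | hE
  · exact ⟨1, one_pos, fun x => by simp [Subsingleton.elim x 0]⟩
  obtain ⟨x₀, hx₀, hmin⟩ := (isCompact_sphere (0 : E) 1).exists_isMinOn
    (NormedSpace.sphere_nonempty.2 zero_le_one) p.continuous_of_finiteDimensional.continuousOn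
  have hpos : 0 < p x₀ := (apply_nonneg p x₀).lt_of_ne fun h => by
    simp [hp x₀ h.symm] at hx₀
  refine ⟨p x₀, hpos, fun x => ?_⟩
  rcases eq_or_ne x 0 with rfl | hx
  · simp
  have hnx : 0 < ‖x‖ := norm_pos_iff.2 hx
  have hunit : ‖x‖⁻¹ • x ∈ Metric.sphere (0 : E) 1 := by
    simp [norm_smul, inv_mul_cancel₀ hnx.ne']
  have hle : p x₀ ≤ p (‖x‖⁻¹ • x) := hmin hunit
  rw [map_smul_eq_mul, norm_inv, norm_norm, le_inv_mul_iff₀ hnx] at hle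
  linarith

theorem exists_le_mul_of_finiteDimensional (p q : Seminorm ℝ E) (hp : ∀ x, p x = 0 → x = 0) :
    ∃ C > 0, ∀ x, q x ≤ C * p x := by
  obtain ⟨C, hC⟩ := q.exists_le_mul_norm
  obtain ⟨c, hc, hc'⟩ := p.exists_pos_mul_norm_le hp
  refine ⟨max C 1 / c, by positivity, fun x => ?_⟩
  calc q x ≤ max C 1 * ‖x‖ := (hC x).trans (by gcongr; exact le_max_left C 1)
    _ = max C 1 / c * (c * ‖x‖) := by field_simp
    _ ≤ max C 1 / c * p x := by gcongr; exact hc' x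

end Seminorm

theorem antitone_rpow_one_div_pow_of_le_pow {u : ℕ → ℝ} {k : ℕ} (hk : 0 < k) (hu : ∀ m, 0 ≤ u m)
    (h : ∀ m, u (m + 1) ≤ u m ^ k) : Antitone fun m => u m ^ ((1 : ℝ) / (k : ℝ) ^ m) := by
  refine antitone_nat_of_succ_le fun m => ?_
  calc u (m + 1) ^ ((1 : ℝ) / (k : ℝ) ^ (m + 1))
      ≤ (u m ^ k) ^ ((1 : ℝ) / (k : ℝ) ^ (m + 1)) := by gcongr; exacts [hu _, h m]
    _ = u m ^ ((1 : ℝ) / (k : ℝ) ^ m) := by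
        rw [← Real.rpow_natCast, ← Real.rpow_mul (hu m)]
        congr 1
        field_simp
        ring

theorem Filter.Tendsto.rpow_of_le_mul_of_le_mul {α : Type*} {l : Filter α} {u v e : α → ℝ}
    {c C L : ℝ} (hlim : Tendsto (fun x => u x ^ e x) l (𝓝 L)) (he : Tendsto e l (𝓝 0))
    (he₀ : ∀ x, 0 ≤ e x) (hu : ∀ x, 0 ≤ u x) (hc : 0 < c) (hC : 0 < C)
    (hlow : ∀ x, c * u x ≤ v x) (hup : ∀ x, v x ≤ C * u x) :
    Tendsto (fun x => v x ^ e x) l (𝓝 L) := by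
  have hconst : ∀ a : ℝ, 0 < a → Tendsto (fun x => a ^ e x * u x ^ e x) l (𝓝 L) := fun a ha => by
    simpa using (tendsto_const_nhds.rpow he (Or.inl ha.ne')).mul hlim
  refine tendsto_of_tendsto_of_tendsto_of_le_of_le (hconst c hc) (hconst C hC) (fun x => ?_)
    (fun x => ?_)
  · rw [← Real.mul_rpow hc.le (hu x)]
    exact Real.rpow_le_rpow (by have := hu x; positivity) (hlow x) (he₀ x)
  · rw [← Real.mul_rpow hC.le (hu x)]
    exact Real.rpow_le_rpow ((mul_nonneg hc.le (hu x)).trans (hlow x)) (hup x) (he₀ x)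

/-- Gelfand formula for third order tensors: if a norm `N` satisfies
`N(A³) ≤ (N A)³` for the cubic power, then `m ↦ N(A^{3^m})^{1/3^m}` is
non-increasing, hence converges to its infimum (the Gelfand limit), and for any
other norm `N'` on the same space, `m ↦ N'(A^{3^m})^{1/3^m}` converges to the
same limit. -/
theorem gelfand_limit_exists {d₁ d₂ d₃ : ℕ}
    (N : (Fin d₁ → Fin d₂ → Fin d₃ → ℝ) → ℝ)
    (hN_eq : ∀ A, N A = 0 → A = 0)
    (hN_smul : ∀ (α : ℝ) A, N (fun i j k => α * A i j k) = |α| * N A)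
    (hN_add : ∀ A B, N (fun i j k => A i j k + B i j k) ≤ N A + N B)
    (hN_cube : ∀ A, N (cubicPow A) ≤ (N A) ^ 3)
    (N' : (Fin d₁ → Fin d₂ → Fin d₃ → ℝ) → ℝ)
    (hN'_eq : ∀ A, N' A = 0 → A = 0)
    (hN'_smul : ∀ (α : ℝ) A, N' (fun i j k => α * A i j k) = |α| * N' A)
    (hN'_add : ∀ A B, N' (fun i j k => A i j k + B i j k) ≤ N' A + N' B)
    (A : Fin d₁ → Fin d₂ → Fin d₃ → ℝ) :
    Antitone (fun m : ℕ => (N (cubicPow^[m] A)) ^ ((1 : ℝ) / 3 ^ m)) ∧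
    Filter.Tendsto (fun m : ℕ => (N (cubicPow^[m] A)) ^ ((1 : ℝ) / 3 ^ m))
      Filter.atTop (nhds (⨅ m : ℕ, (N (cubicPow^[m] A)) ^ ((1 : ℝ) / 3 ^ m))) ∧
    Filter.Tendsto (fun m : ℕ => (N' (cubicPow^[m] A)) ^ ((1 : ℝ) / 3 ^ m))
      Filter.atTop (nhds (⨅ m : ℕ, (N (cubicPow^[m] A)) ^ ((1 : ℝ) / 3 ^ m))) := by
  let p : Seminorm ℝ _ := .of N hN_add hN_smul
  let p' : Seminorm ℝ _ := .of N' hN'_add hN'_smul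
  have hcube : ∀ m, N (cubicPow^[m + 1] A) ≤ N (cubicPow^[m] A) ^ 3 := fun m => by
    rw [Function.iterate_succ_apply']
    exact hN_cube _
  have hanti : Antitone fun m : ℕ => N (cubicPow^[m] A) ^ ((1 : ℝ) / 3 ^ m) := by
    exact_mod_cast antitone_rpow_one_div_pow_of_le_pow three_pos (fun m => apply_nonneg p _) hcube
  have hlim := tendsto_atTop_ciInf hanti ⟨0, Set.forall_mem_range.2 fun m =>
    Real.rpow_nonneg (apply_nonneg p _) _⟩
  obtain ⟨C, hC, hN'_le⟩ := p.exists_le_mul_of_finiteDimensional p' hN_eq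
  obtain ⟨c, hc, hN_le⟩ := p'.exists_le_mul_of_finiteDimensional p hN'_eq
  refine ⟨hanti, hlim, hlim.rpow_of_le_mul_of_le_mul ?_ (fun m => by positivity)
    (fun m => apply_nonneg p _) (inv_pos.2 hc) hC (fun m => ?_) (fun m => hN'_le _)⟩
  · simpa only [one_div, ← inv_pow] using
      tendsto_pow_atTop_nhds_zero_of_lt_one (r := (3 : ℝ)⁻¹) (by norm_num) (by norm_num)
  · exact (inv_mul_le_iff₀ hc).2 (hN_le _)
end
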